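/- arXiv:1407.5387 — 2 statements merged into one kernel-verified Lean document; each statement's English description precedes it below -/
import Mathlib

section
/- Let L_0 = ∂_t, L_{−1} = e^{t}∂_t, L_1 = e^{−t}∂_t and C = ∂_u be vector fields on ℝ³ (coordinates (t,x,u)). If Q is a smooth vector field on ℝ³ satisfying [L_0, Q] = −2Q, [L_{−1}, Q] = −3L_1 and [Q, C] = 0, then Q = e^{−2t}∂_t. (Step of Case 1 of Section 4: the operator L_2 is uniquely determined.) -/
/-- Lie bracket of smooth vector fields on `ℝ³` (coordinates `(t,x,u)`), identified with
`C^∞` maps `ℝ³ → ℝ³`: `[X,Y](p) = (DY)(p)(X(p)) - (DX)(p)(Y(p))`. -/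
noncomputable def lieBracket3 (X Y : ℝ × ℝ × ℝ → ℝ × ℝ × ℝ) : ℝ × ℝ × ℝ → ℝ × ℝ × ℝ :=
  fun p => fderiv ℝ Y p (X p) - fderiv ℝ X p (Y p)

/-!
Evaluate both bracket relations at a point `p = (t,x,u)`. Since `L_0` is constant,
`[L_0, Q](p) = DQ(p) e₁`, so the first relation gives `DQ(p) e₁ = -2 Q(p)`. Since
`L_{-1} = e^t L_0`, linearity of `DQ(p)` turns the second relation into
`-2 e^t Q(p) - e^t Q_t(p) e₁ = -3 e^{-t} e₁`, which determines `Q(p)` pointwise: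
`Q_t = e^{-2t}` and `Q_x = Q_u = 0`.
-/

open Real

lemma lieBracket3_const_left (v : ℝ × ℝ × ℝ) (Y : ℝ × ℝ × ℝ → ℝ × ℝ × ℝ) (p : ℝ × ℝ × ℝ) :
    lieBracket3 (fun _ => v) Y p = fderiv ℝ Y p v := by
  simp [lieBracket3]

lemma lieBracket3_smul_const_left {f : ℝ × ℝ × ℝ → ℝ} {p : ℝ × ℝ × ℝ}
    (hf : DifferentiableAt ℝ f p) (v : ℝ × ℝ × ℝ) (Y : ℝ × ℝ × ℝ → ℝ × ℝ × ℝ) :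
    lieBracket3 (fun q => f q • v) Y p = f p • fderiv ℝ Y p v - fderiv ℝ f p (Y p) • v := by
  simp [lieBracket3, fderiv_smul_const hf]

lemma fderiv_exp_fst_apply (p w : ℝ × ℝ × ℝ) :
    fderiv ℝ (fun q : ℝ × ℝ × ℝ => exp q.1) p w = exp p.1 * w.1 := by
  rw [(hasFDerivAt_fst.exp).fderiv]
  simp [smul_eq_mul]

theorem L2_unique_case1_general (Q : ℝ × ℝ × ℝ → ℝ × ℝ × ℝ)
    (h0 : lieBracket3 (fun _ => (1, 0, 0)) Q = fun p => (-2 : ℝ) • Q p)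
    (h1 : lieBracket3 (fun p => (Real.exp p.1, 0, 0)) Q
      = fun p => (-3 * Real.exp (-p.1), 0, 0)) :
    Q = fun p => (Real.exp (-2 * p.1), 0, 0) := by
  funext p
  have hL0 : fderiv ℝ Q p (1, 0, 0) = (-2 : ℝ) • Q p := by
    rw [← lieBracket3_const_left]; exact congrFun h0 p
  have hL1 := congrFun h1 p
  have hL1_eq : (fun q : ℝ × ℝ × ℝ => ((exp q.1, 0, 0) : ℝ × ℝ × ℝ))
      = fun q => exp q.1 • ((1, 0, 0) : ℝ × ℝ × ℝ) := by
    funext q; simp [Prod.smul_def]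
  rw [hL1_eq, lieBracket3_smul_const_left (differentiableAt_fst.exp), hL0,
    fderiv_exp_fst_apply] at hL1
  simp only [Prod.ext_iff, Prod.smul_def, Prod.fst_sub, Prod.snd_sub, smul_eq_mul] at hL1
  obtain ⟨ht, hx, hu⟩ := hL1
  have hexp : exp p.1 * exp (-2 * p.1) = exp (-p.1) := by rw [← exp_add]; ring_nf
  have hpos := exp_pos p.1
  refine Prod.ext ?_ (Prod.ext ?_ ?_)
  · exact mul_left_cancel₀ hpos.ne' (by rw [hexp]; linarith)
  · nlinarith
  · nlinarith

/-- Let `L_0 = ∂_t`, `L_{-1} = e^t ∂_t`, `L_1 = e^{-t} ∂_t` and `C = ∂_u` on `ℝ³`.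
If a smooth vector field `Q` satisfies `[L_0, Q] = -2Q`, `[L_{-1}, Q] = -3 L_1` and
`[Q, C] = 0`, then `Q = e^{-2t} ∂_t`. -/
theorem L2_unique_case1 (Q : ℝ × ℝ × ℝ → ℝ × ℝ × ℝ)
    (hQ : ContDiff ℝ (⊤ : ℕ∞) Q)
    (h0 : lieBracket3 (fun _ => (1, 0, 0)) Q = fun p => (-2 : ℝ) • Q p)
    (h1 : lieBracket3 (fun p => (Real.exp p.1, 0, 0)) Q
      = fun p => (-3 * Real.exp (-p.1), 0, 0))
    (h2 : lieBracket3 Q (fun _ => (0, 0, 1)) = fun _ => 0) :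
    Q = fun p => (Real.exp (-2 * p.1), 0, 0) :=
  L2_unique_case1_general Q h0 h1
end

section
/- The realization 𝔇₃ of Theorem 5 is a realization of the direct sum of two Witt algebras on ℝ³: the families of vector fields A_m = e^{−mt}∂_t + m e^{−mt}∂_x and B_n = n e^{−nu}∂_x + e^{−nu}∂_u (m, n ∈ ℤ) satisfy [A_m, A_k] = (m−k)A_{m+k} and [B_n, B_k] = (n−k)B_{n+k} for all m, k, n ∈ ℤ, and [A_m, B_n] = 0 for all m, n ∈ ℤ. -/
/-- First Witt family of the realization `𝔇₃`: `A_m = e^{-mt} ∂_t + m e^{-mt} ∂_x`. -/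
noncomputable def D3A (m : ℤ) : ℝ × ℝ × ℝ → ℝ × ℝ × ℝ := fun p =>
  (Real.exp (-(m : ℝ) * p.1), (m : ℝ) * Real.exp (-(m : ℝ) * p.1), 0)

/-- Second Witt family of the realization `𝔇₃`: `B_n = n e^{-nu} ∂_x + e^{-nu} ∂_u`. -/
noncomputable def D3B (n : ℤ) : ℝ × ℝ × ℝ → ℝ × ℝ × ℝ := fun p =>
  (0, (n : ℝ) * Real.exp (-(n : ℝ) * p.2.2), Real.exp (-(n : ℝ) * p.2.2))

open VectorField ContinuousLinearMap

section expField

variable {E : Type*} [NormedAddCommGroup E] [NormedSpace ℝ E]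

noncomputable def expField (a : ℝ) (ℓ : E →L[ℝ] ℝ) (c : E) : E → E :=
  fun q => Real.exp (a * ℓ q) • c

theorem fderiv_expField_apply (a : ℝ) (ℓ : E →L[ℝ] ℝ) (c p v : E) :
    fderiv ℝ (expField a ℓ c) p v = (a * ℓ v) • expField a ℓ c p := by
  have h : HasFDerivAt (expField a ℓ c) _ p :=
    ((ℓ.hasFDerivAt (x := p)).const_mul a).exp.smul_const c
  rw [h.fderiv, expField]
  simp only [smulRight_apply, smul_apply, smul_eq_mul]
  module

theorem lieBracket_expField (a b : ℝ) (ℓ ℓ' : E →L[ℝ] ℝ) (c d p : E) :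
    lieBracket ℝ (expField a ℓ c) (expField b ℓ' d) p =
      Real.exp (a * ℓ p + b * ℓ' p) • ((b * ℓ' c) • d - (a * ℓ d) • c) := by
  simp only [lieBracket, fderiv_expField_apply, expField, map_smul, Real.exp_add]
  module

end expField

theorem lieBracket3_eq_lieBracket : lieBracket3 = lieBracket ℝ := rfl

theorem D3A_eq_expField (m : ℤ) : D3A m = expField (-m) (fst ℝ ℝ (ℝ × ℝ)) (1, m, 0) := by
  ext p <;> simp [D3A, expField, mul_comm]

theorem D3B_eq_expField (n : ℤ) :
    D3B n = expField (-n) ((snd ℝ ℝ ℝ).comp (snd ℝ ℝ (ℝ × ℝ))) (0, n, 1) := by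
  ext p <;> simp [D3B, expField, mul_comm]

/-- The realization `𝔇₃` is a realization of the direct sum of two Witt algebras on `ℝ³`:
both families satisfy the Witt commutation relations and they commute with each other. -/
theorem D3_direct_sum_realization :
    (∀ m k : ℤ, lieBracket3 (D3A m) (D3A k)
        = fun p => ((m : ℝ) - (k : ℝ)) • D3A (m + k) p) ∧
    (∀ n k : ℤ, lieBracket3 (D3B n) (D3B k)
        = fun p => ((n : ℝ) - (k : ℝ)) • D3B (n + k) p) ∧
    (∀ m n : ℤ, lieBracket3 (D3A m) (D3B n) = fun _ => 0) := by
  refine ⟨fun m k => ?_, fun n k => ?_, fun m n => ?_⟩ <;> funext p <;>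
    simp only [lieBracket3_eq_lieBracket, D3A_eq_expField, D3B_eq_expField,
      lieBracket_expField] <;>
    ext <;> simp [expField] <;> ring_nf
end
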